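/- arXiv:2501.02254 — 2 statements merged into one kernel-verified Lean document; each statement's English description precedes it below -/
import Mathlib

section
/- For every (x̄, ȳ, z̄) ∈ (Ω ∩ C) × dom(∂g*) × dom(h₂*) and c̄ = 1/g(x̄), the Fréchet subdifferential of Q at (x̄, ȳ, z̄, c̄) contains the product set whose components are: (in x) (2c̄ + c̄²(g*(ȳ) − ⟨x̄,ȳ⟩))·∂̂f_C(x̄) − c̄² f_C(x̄) ȳ + ∇h₁(x̄) − z̄; (in y) c̄² f_C(x̄)·∂g*(ȳ) − c̄² f_C(x̄) x̄; (in z) ∂̂h₂*(z̄) − x̄; (in c) the singleton {2 f_C(x̄) + 2c̄ f_C(x̄)(g*(ȳ) − ⟨x̄,ȳ⟩)}. -/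
open Filter Topology Set
open scoped Classical

noncomputable section

/-- `En n` is the Euclidean space `ℝⁿ`. -/
abbrev En (n : ℕ) := EuclideanSpace ℝ (Fin n)

variable {n : ℕ}

/-- `Ω := {x : g x ≠ 0}`. -/
def Omeg (g : En n → ℝ) : Set (En n) := {x | g x ≠ 0}

/-- The extended objective `F` of the fractional program (P), with `h = h₁ - h₂`:
`F x = f x / g x + (h₁ x - h₂ x)` on `Ω ∩ C` and `+∞` elsewhere. -/
def Fobj (f g h₁ h₂ : En n → ℝ) (C : Set (En n)) (x : En n) : EReal :=
  if x ∈ Omeg g ∩ C then ((f x / g x + (h₁ x - h₂ x) : ℝ) : EReal) else ⊤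

/-- The objective `F̃` of the min-max reformulation:
`F̃(x,c) = 2 c f x - c² f x g x + h x + ι_{Ω∩C}(x)`. -/
def Ftil (f g h₁ h₂ : En n → ℝ) (C : Set (En n)) (x : En n) (c : ℝ) : EReal :=
  if x ∈ Omeg g ∩ C then
    ((2 * c * f x - c ^ 2 * f x * g x + (h₁ x - h₂ x) : ℝ) : EReal) else ⊤

/-- The Fréchet subdifferential of an extended-real-valued function on `ℝⁿ`. -/
def fsubdiff (φ : En n → EReal) (x : En n) : Set (En n) :=
  {y | φ x ≠ ⊤ ∧ ∀ ε : ℝ, 0 < ε →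
      ∀ᶠ z in 𝓝 x, φ x + (((inner ℝ y (z - x) : ℝ) - ε * ‖z - x‖ : ℝ) : EReal) ≤ φ z}

/-- The convex (classical) subdifferential of a real-valued function on `ℝⁿ`. -/
def convSubdiff (φ : En n → ℝ) (x : En n) : Set (En n) :=
  {y | ∀ z, φ x + (inner ℝ y (z - x) : ℝ) ≤ φ z}

/-- The convex subdifferential of an extended-real-valued function on `ℝⁿ`. -/
def eSubdiff (φ : En n → EReal) (x : En n) : Set (En n) :=
  {y | ∀ z, φ x + (((inner ℝ y (z - x) : ℝ)) : EReal) ≤ φ z}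

/-- The convex conjugate of a real-valued function. -/
def conjF (φ : En n → ℝ) (y : En n) : EReal :=
  ⨆ x : En n, (((inner ℝ x y : ℝ) - φ x : ℝ) : EReal)

/-- The auxiliary function `Q`. -/
def Qaux (f g h₁ h₂ : En n → ℝ) (C : Set (En n)) (x y z : En n) (c : ℝ) : EReal :=
  if x ∈ C ∧ conjF g y ≠ ⊤ ∧ conjF h₂ z ≠ ⊤ then
    ((2 * c * f x + c ^ 2 * f x * ((conjF g y).toReal - (inner ℝ x y : ℝ))
        + h₁ x + (conjF h₂ z).toReal - (inner ℝ x z : ℝ) : ℝ) : EReal)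
  else ⊤

/-- The proximal operator (as a set) of `t • (f + ι_C)` at `v`. -/
def proxfC (f : En n → ℝ) (C : Set (En n)) (t : ℝ) (v : En n) : Set (En n) :=
  {z | z ∈ C ∧ ∀ w ∈ C, t * f z + ‖v - z‖ ^ 2 / 2 ≤ t * f w + ‖v - w‖ ^ 2 / 2}

/-- The standing assumptions on the data of problem (P). -/
def StandingAssumptions (f g h₁ h₂ : En n → ℝ) (C : Set (En n)) : Prop :=
  (∀ x, 0 ≤ f x) ∧ (∀ x, 0 ≤ g x) ∧
  LowerSemicontinuous f ∧ LowerSemicontinuous g ∧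
  LowerSemicontinuous (fun x => h₁ x - h₂ x) ∧
  IsClosed C ∧ (Omeg g ∩ C).Nonempty ∧
  (∀ x ∈ Omeg g, ∃ s ∈ 𝓝 x, ∃ K : NNReal, LipschitzOnWith K f s) ∧
  ConvexOn ℝ univ g ∧ ConvexOn ℝ univ h₂ ∧
  (∀ x ∈ Omeg g, ∃ δ > 0, (∀ y ∈ Metric.ball x δ, HasGradientAt h₁ (gradient h₁ y) y) ∧
      ∃ K : NNReal, LipschitzOnWith K (gradient h₁) (Metric.ball x δ))

/-- An admissible run of the alternating maximization proximal descent algorithm (AMPDA),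
including the backtracking line-search data: at iteration `k`, the trial points
`trial k j` are computed with stepsizes `αtil k * γ ^ j`, the trials `j < J k` fail the
acceptance test, and `x (k+1) = trial k (J k)` is accepted. -/
structure AMPDA (f g h₁ h₂ : En n → ℝ) (C : Set (En n)) (x0 : En n)
    (αlo αhi σ γ : ℝ) : Type where
  x : ℕ → En n
  y : ℕ → En n
  z : ℕ → En n
  c : ℕ → ℝ
  αtil : ℕ → ℝ
  J : ℕ → ℕ
  trial : ℕ → ℕ → En n
  hx0 : x 0 = x0
  hc : ∀ k, c k = 1 / g (x k)
  hy : ∀ k, y k ∈ convSubdiff g (x k)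
  hz : ∀ k, z k ∈ convSubdiff h₂ (x k)
  hαtil : ∀ k, αlo ≤ αtil k ∧ αtil k ≤ αhi
  htrial : ∀ k j, trial k j ∈ proxfC f C (αtil k * γ ^ j * c k)
      (x k - (αtil k * γ ^ j) • (gradient h₁ (x k) - z k - (c k ^ 2 * f (x k)) • y k))
  hfail : ∀ k, ∀ j < J k, ¬ (trial k j ∈ Omeg g ∧
      Qaux f g h₁ h₂ C (trial k j) (y k) (z k) (1 / g (trial k j))
          + ((σ / 2 * ‖trial k j - x k‖ ^ 2 : ℝ) : EReal)
        ≤ Fobj f g h₁ h₂ C (x k))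
  hstep : ∀ k, x (k + 1) = trial k (J k)
  hmem : ∀ k, x (k + 1) ∈ Omeg g
  haccept : ∀ k,
      Qaux f g h₁ h₂ C (x (k + 1)) (y k) (z k) (1 / g (x (k + 1)))
          + ((σ / 2 * ‖x (k + 1) - x k‖ ^ 2 : ℝ) : EReal)
        ≤ Fobj f g h₁ h₂ C (x k)

/-- The accepted stepsize `α_k` of AMPDA at iteration `k`. -/
def AMPDA.step {f g h₁ h₂ : En n → ℝ} {C : Set (En n)} {x0 : En n} {αlo αhi σ γ : ℝ}
    (A : AMPDA f g h₁ h₂ C x0 αlo αhi σ γ) (k : ℕ) : ℝ := A.αtil k * γ ^ A.J k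

/-- `x⋆` is a critical point of `F`. -/
def isCriticalPt (f g h₁ h₂ : En n → ℝ) (C : Set (En n)) (xs : En n) : Prop :=
  g xs ≠ 0 ∧
  ∃ u ∈ fsubdiff (fun x : En n => if x ∈ C then (((1 / g xs) * f x : ℝ) : EReal) else ⊤) xs,
  ∃ ys ∈ convSubdiff g xs, ∃ zs ∈ convSubdiff h₂ xs,
    (0 : En n) = u - ((1 / g xs) ^ 2 * f xs) • ys + gradient h₁ xs - zs

/-- `xb` is an `ε`-critical point of `F`. -/
def epsCrit (f g h₁ h₂ : En n → ℝ) (C : Set (En n)) (ε : ℝ) (xb : En n) : Prop :=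
  g xb ≠ 0 ∧ ∃ α : ℝ, 0 < α ∧ ∃ yb ∈ convSubdiff g xb, ∃ zb ∈ convSubdiff h₂ xb,
    (proxfC f C (α * (1 / g xb))
        (xb - α • (gradient h₁ xb - zb - ((1 / g xb) ^ 2 * f xb) • yb))).Nonempty ∧
    Metric.infDist xb (proxfC f C (α * (1 / g xb))
        (xb - α • (gradient h₁ xb - zb - ((1 / g xb) ^ 2 * f xb) • yb))) ≤ ε

/-- The product space `ℝⁿ × ℝⁿ × ℝⁿ × ℝ` on which `Q` lives. -/
abbrev E4 (n : ℕ) := En n × En n × En n × ℝ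

/-- The natural inner product on `ℝⁿ × ℝⁿ × ℝⁿ × ℝ`. -/
def inner4 (v w : E4 n) : ℝ :=
  (inner ℝ v.1 w.1 : ℝ) + (inner ℝ v.2.1 w.2.1 : ℝ) + (inner ℝ v.2.2.1 w.2.2.1 : ℝ)
    + v.2.2.2 * w.2.2.2

/-- The Fréchet subdifferential of an extended-real-valued function on
`ℝⁿ × ℝⁿ × ℝⁿ × ℝ`. -/
def fsubdiff4 (φ : E4 n → EReal) (w : E4 n) : Set (E4 n) :=
  {v | φ w ≠ ⊤ ∧ ∀ ε : ℝ, 0 < ε →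
      ∀ᶠ u in 𝓝 w, φ w + ((inner4 v (u - w) - ε * ‖u - w‖ : ℝ) : EReal) ≤ φ u}

/-- The limiting subdifferential of an extended-real-valued function on
`ℝⁿ × ℝⁿ × ℝⁿ × ℝ`. -/
def lsubdiff4 (φ : E4 n → EReal) (w : E4 n) : Set (E4 n) :=
  {v | ∃ (u : ℕ → E4 n) (q : ℕ → E4 n), Tendsto u atTop (𝓝 w) ∧
      Tendsto (fun k => φ (u k)) atTop (𝓝 (φ w)) ∧ Tendsto q atTop (𝓝 v) ∧
      ∀ k, q k ∈ fsubdiff4 φ (u k)}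

/-- The function `Q` as a function on the product space. -/
def QfunOf (f g h₁ h₂ : En n → ℝ) (C : Set (En n)) : E4 n → EReal :=
  fun w => Qaux f g h₁ h₂ C w.1 w.2.1 w.2.2.1 w.2.2.2

/-- The Kurdyka-Łojasiewicz property of `φ` at `w`. -/
def KLAt4 (φ : E4 n → EReal) (w : E4 n) : Prop :=
  ∃ ε : EReal, 0 < ε ∧ ∃ δ : ℝ, 0 < δ ∧ ∃ ψ ψ' : ℝ → ℝ,
    ψ 0 = 0 ∧
    ContinuousOn ψ {t : ℝ | 0 ≤ t ∧ (t : EReal) < ε} ∧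
    ConcaveOn ℝ {t : ℝ | 0 ≤ t ∧ (t : EReal) < ε} ψ ∧
    (∀ t : ℝ, 0 < t → (t : EReal) < ε → HasDerivAt ψ (ψ' t) t ∧ 0 < ψ' t) ∧
    ∀ u : E4 n, ‖u - w‖ < δ → φ w < φ u → φ u < φ w + ε →
      ∀ p ∈ lsubdiff4 φ u, 1 ≤ ψ' ((φ u - φ w).toReal) * ‖p‖

/-- The ℓ¹-norm on `ℝⁿ`. -/
def l1 (x : En n) : ℝ := ∑ i, |x i|

/-- The ℓ²-norm on `ℝⁿ`. -/
def l2 (x : En n) : ℝ := ‖x‖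

/-- `S_μ`, the set of vectors with at most `μ` nonzero entries. -/
def Smu (μ : ℕ) : Set (En n) := {z | {j | z j ≠ 0}.ncard ≤ μ}

/-- `h₁` for the robust signal recovery models: `(λ/2) ‖A x - b‖²`. -/
def h1L {m : ℕ} (A : En n →ₗ[ℝ] En m) (b : En m) (lam : ℝ) (x : En n) : ℝ :=
  lam / 2 * ‖A x - b‖ ^ 2

/-- `h₂` for the robust signal recovery models:
`(λ/2) ‖T_μ (A x - b)‖² = (λ/2) (‖A x - b‖² - dist²(A x - b, S_μ))`. -/
def h2L {m : ℕ} (A : En n →ₗ[ℝ] En m) (b : En m) (lam : ℝ) (μ : ℕ) (x : En n) : ℝ :=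
  lam / 2 * (‖A x - b‖ ^ 2 - (Metric.infDist (A x - b) (Smu μ)) ^ 2)

/-- The box constraint `{x : x̲ ≤ x ≤ x̄}`. -/
def box (xlo xhi : En n) : Set (En n) := {x | ∀ i, xlo i ≤ x i ∧ x i ≤ xhi i}

/-
`Q` is `⊤` off `C × dom g* × dom h₂* × ℝ`, so only its finite part has to be bounded from below
near `(x̄, ȳ, z̄, c̄)`. There, since `f ≥ 0`, replacing `g*(y)` by its affine minorant
`g*(ȳ) + ⟨w, y - ȳ⟩` (`w ∈ ∂g*(ȳ)`) lowers `Q` without changing its value at the base point.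
The minorant is `f(x)` times a smooth weight, plus the smooth `h₁(x) - ⟨x, z⟩`, plus `h₂*(z)`.
The weight is `≥ c̄ > 0` at the base point by the Fenchel–Young inequality `g*(ȳ) ≥ ⟨x̄, ȳ⟩ - g(x̄)`,
so a product rule for the locally Lipschitz `f` and the sum rule give the subgradient.
-/

section FrechetLower

variable {E : Type*} [NormedAddCommGroup E]

/-- For `ψ` equal to `φ` on `D` and to `⊤` off `D`, `v ∈ ∂̂ψ(w)` amounts to
`w ∈ D ∧ HasFrechetLowerWithinAt φ ⟨v, ·⟩ D w`. -/
def HasFrechetLowerWithinAt (φ L : E → ℝ) (D : Set E) (w : E) : Prop :=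
  ∀ ε > 0, ∀ᶠ u in 𝓝[D] w, φ w + L (u - w) - ε * ‖u - w‖ ≤ φ u

namespace HasFrechetLowerWithinAt

variable {φ ψ L M : E → ℝ} {D D' : Set E} {w : E}

theorem mono (h : HasFrechetLowerWithinAt φ L D w) (hD : D' ⊆ D) :
    HasFrechetLowerWithinAt φ L D' w :=
  fun ε hε => nhdsWithin_mono w hD (h ε hε)

theorem add (hφ : HasFrechetLowerWithinAt φ L D w) (hψ : HasFrechetLowerWithinAt ψ M D w) :
    HasFrechetLowerWithinAt (fun u => φ u + ψ u) (fun d => L d + M d) D w := by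
  intro ε hε
  filter_upwards [hφ (ε / 2) (by positivity), hψ (ε / 2) (by positivity)] with u hu hu'
  linarith

theorem of_le (hψ : HasFrechetLowerWithinAt ψ L D w) (hle : ∀ u ∈ D, ψ u ≤ φ u)
    (hw : φ w = ψ w) : HasFrechetLowerWithinAt φ L D w := by
  intro ε hε
  filter_upwards [hψ ε hε, self_mem_nhdsWithin] with u hu huD
  linarith [hle u huD]

variable [NormedSpace ℝ E]

theorem comp {F : Type*} [NormedAddCommGroup F] [NormedSpace ℝ F] {φ L : F → ℝ} {D : Set F}
    (π : E →L[ℝ] F) (h : HasFrechetLowerWithinAt φ L D (π w)) :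
    HasFrechetLowerWithinAt (fun u => φ (π u)) (fun d => L (π d)) (π ⁻¹' D) w := by
  intro ε hε
  have hπ : Tendsto π (𝓝[π ⁻¹' D] w) (𝓝[D] (π w)) :=
    π.continuous.continuousWithinAt.tendsto_nhdsWithin (mapsTo_preimage π D)
  filter_upwards [hπ.eventually (h (ε / (‖π‖ + 1)) (by positivity))] with u hu
  have hnorm : ε / (‖π‖ + 1) * ‖π (u - w)‖ ≤ ε * ‖u - w‖ := by
    calc ε / (‖π‖ + 1) * ‖π (u - w)‖ ≤ ε / (‖π‖ + 1) * ((‖π‖ + 1) * ‖u - w‖) := by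
          gcongr
          exact (π.le_opNorm _).trans (by nlinarith [norm_nonneg (u - w)])
      _ = ε * ‖u - w‖ := by field_simp
  rw [← map_sub] at hu
  linarith

/-- Calmness of `φ` is what makes the cross term `(φ u - φ w) (m u - m w)` an `o(‖u - w‖)`. -/
theorem mul {m : E → ℝ} {m' : E →L[ℝ] ℝ} (hφ : HasFrechetLowerWithinAt φ L D w)
    (hcalm : (fun u => φ u - φ w) =O[𝓝 w] (fun u => u - w)) (hm : HasFDerivAt m m' w)
    (hm0 : 0 ≤ m w) :
    HasFrechetLowerWithinAt (fun u => φ u * m u) (fun d => m w * L d + φ w * m' d) D w := by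
  intro ε hε
  obtain ⟨K, hK0, hK⟩ := hcalm.exists_pos
  set δ := ε / (m w + |φ w| + K + 1) with hδ
  have hδ0 : 0 < δ := by positivity
  have hδε : δ * (m w + |φ w| + K) ≤ ε := by
    rw [hδ, div_mul_eq_mul_div, div_le_iff₀ (by positivity)]
    nlinarith
  have hmcont : ∀ᶠ u in 𝓝 w, |m u - m w| ≤ δ := by
    filter_upwards [Metric.tendsto_nhds.mp hm.continuousAt δ hδ0] with u hu
    exact (Real.dist_eq _ _ ▸ hu).le
  filter_upwards [hφ δ hδ0, nhdsWithin_le_nhds (hm.isLittleO.bound hδ0),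
    nhdsWithin_le_nhds hK.bound, nhdsWithin_le_nhds hmcont] with u hφu hmu hcalmu hmu'
  simp only [Real.norm_eq_abs] at hmu hcalmu
  have hlin : -(m w * (δ * ‖u - w‖)) ≤ m w * (φ u - φ w - L (u - w)) := by nlinarith
  have hdiff : |φ w * (m u - m w - m' (u - w))| ≤ |φ w| * (δ * ‖u - w‖) := by
    rw [abs_mul]; gcongr
  have hcross : |(φ u - φ w) * (m u - m w)| ≤ K * ‖u - w‖ * δ := by
    rw [abs_mul]; gcongr
  have hsplit : φ u * m u - (φ w * m w + (m w * L (u - w) + φ w * m' (u - w)))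
      = m w * (φ u - φ w - L (u - w)) + φ w * (m u - m w - m' (u - w))
        + (φ u - φ w) * (m u - m w) := by ring
  have herr : δ * (m w + |φ w| + K) * ‖u - w‖ ≤ ε * ‖u - w‖ :=
    mul_le_mul_of_nonneg_right hδε (norm_nonneg _)
  linarith [neg_abs_le (φ w * (m u - m w - m' (u - w))),
    neg_abs_le ((φ u - φ w) * (m u - m w))]

end HasFrechetLowerWithinAt

theorem HasFDerivAt.hasFrechetLowerWithinAt [NormedSpace ℝ E] {φ : E → ℝ} {φ' : E →L[ℝ] ℝ}
    {w : E} (h : HasFDerivAt φ φ' w) (D : Set E) : HasFrechetLowerWithinAt φ φ' D w := by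
  intro ε hε
  filter_upwards [nhdsWithin_le_nhds (h.isLittleO.bound hε)] with u hu
  rw [Real.norm_eq_abs] at hu
  linarith [neg_abs_le (φ u - φ w - φ' (u - w))]

theorem LipschitzOnWith.isBigO_sub {F : Type*} [NormedAddCommGroup F] {φ : E → F} {K : NNReal}
    {s : Set E} {x : E} (h : LipschitzOnWith K φ s) (hs : s ∈ 𝓝 x) :
    (fun y => φ y - φ x) =O[𝓝 x] (fun y => y - x) := by
  refine Asymptotics.IsBigO.of_bound K ?_
  filter_upwards [hs] with y hy
  simpa only [dist_eq_norm] using h.dist_le_mul y hy x (mem_of_mem_nhds hs)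

end FrechetLower

theorem eventually_ite_le_iff {E : Type*} [TopologicalSpace E] {φ r : E → ℝ} {D : Set E}
    [DecidablePred (· ∈ D)] {w : E} (hw : w ∈ D) :
    (∀ᶠ u in 𝓝 w, (if w ∈ D then (φ w : EReal) else ⊤) + (r u : EReal) ≤
        if u ∈ D then (φ u : EReal) else ⊤) ↔ ∀ᶠ u in 𝓝[D] w, φ w + r u ≤ φ u := by
  rw [eventually_nhdsWithin_iff, if_pos hw]
  refine eventually_congr (Eventually.of_forall fun u => ?_)
  by_cases hu : u ∈ D
  · simp only [hu, if_true, ← EReal.coe_add, EReal.coe_le_coe_iff, forall_const]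
  · simp [hu]

theorem hasFrechetLowerWithinAt_of_mem_fsubdiff {φ : En n → ℝ} {D : Set (En n)}
    [DecidablePred (· ∈ D)] {x y : En n}
    (h : y ∈ fsubdiff (fun z => if z ∈ D then (φ z : EReal) else ⊤) x) :
    x ∈ D ∧ HasFrechetLowerWithinAt φ (inner ℝ y) D x := by
  obtain ⟨hx, hy⟩ := h
  have hxD : x ∈ D := by by_contra hxD; exact hx (if_neg hxD)
  refine ⟨hxD, fun ε hε => ?_⟩
  simpa only [add_sub_assoc] using (eventually_ite_le_iff hxD).mp (hy ε hε)

theorem mem_fsubdiff4_of_hasFrechetLowerWithinAt {q : E4 n → ℝ} {D : Set (E4 n)}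
    [DecidablePred (· ∈ D)] {w v : E4 n} (hw : w ∈ D)
    (h : HasFrechetLowerWithinAt q (inner4 v) D w) :
    v ∈ fsubdiff4 (fun u => if u ∈ D then (q u : EReal) else ⊤) w := by
  refine ⟨by simp [hw], fun ε hε => (eventually_ite_le_iff hw).mpr ?_⟩
  simpa only [add_sub_assoc] using h ε hε

theorem conjF_ne_bot (φ : En n → ℝ) (y : En n) : conjF φ y ≠ ⊥ :=
  ((EReal.bot_lt_coe _).trans_le (le_iSup (fun x => ((inner ℝ x y - φ x : ℝ) : EReal)) 0)).ne'

theorem conjF_eq_ite (φ : En n → ℝ) :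
    conjF φ = fun y => if y ∈ {y | conjF φ y ≠ ⊤} then ((conjF φ y).toReal : EReal) else ⊤ := by
  funext y
  by_cases hy : conjF φ y = ⊤
  · simp [hy]
  · simp [hy, EReal.coe_toReal hy (conjF_ne_bot φ y)]

theorem inner_sub_le_toReal_conjF {φ : En n → ℝ} {y : En n} (hy : conjF φ y ≠ ⊤) (x : En n) :
    inner ℝ x y - φ x ≤ (conjF φ y).toReal := by
  rw [← EReal.coe_le_coe_iff, EReal.coe_toReal hy (conjF_ne_bot φ y)]
  exact le_iSup (fun x => ((inner ℝ x y - φ x : ℝ) : EReal)) x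

theorem conjF_zero_ne_top {φ : En n → ℝ} (hφ : ∀ x, 0 ≤ φ x) : conjF φ 0 ≠ ⊤ := by
  refine ne_top_of_le_ne_top (EReal.coe_ne_top 0) (iSup_le fun x => ?_)
  simpa using hφ x

theorem conjF_ne_top_of_mem_eSubdiff {φ : En n → ℝ} (hφ : ∀ x, 0 ≤ φ x) {y w : En n}
    (hw : w ∈ eSubdiff (conjF φ) y) : conjF φ y ≠ ⊤ := by
  intro hy
  have h := hw 0
  rw [hy, EReal.top_add_coe, top_le_iff] at h
  exact conjF_zero_ne_top hφ h

theorem toReal_conjF_add_inner_le {φ : En n → ℝ} {y y' w : En n}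
    (hw : w ∈ eSubdiff (conjF φ) y) (hy : conjF φ y ≠ ⊤) (hy' : conjF φ y' ≠ ⊤) :
    (conjF φ y).toReal + inner ℝ w (y' - y) ≤ (conjF φ y').toReal := by
  have h := hw y'
  rwa [← EReal.coe_toReal hy (conjF_ne_bot φ y), ← EReal.coe_toReal hy' (conjF_ne_bot φ y'),
    ← EReal.coe_add, EReal.coe_le_coe_iff] at h

section AuxiliaryFunction

variable (f g h₁ h₂ : En n → ℝ) (C : Set (En n))

def domQ : Set (E4 n) := {u | u.1 ∈ C ∧ conjF g u.2.1 ≠ ⊤ ∧ conjF h₂ u.2.2.1 ≠ ⊤}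

def Qreal (u : E4 n) : ℝ :=
  2 * u.2.2.2 * f u.1 + u.2.2.2 ^ 2 * f u.1 * ((conjF g u.2.1).toReal - inner ℝ u.1 u.2.1)
    + h₁ u.1 + (conjF h₂ u.2.2.1).toReal - inner ℝ u.1 u.2.2.1

theorem QfunOf_eq_ite :
    QfunOf f g h₁ h₂ C = fun u => if u ∈ domQ g h₂ C then (Qreal f g h₁ h₂ u : EReal) else ⊤ := by
  funext u
  simp only [QfunOf, Qaux, domQ, Qreal, mem_ofPred_eq]
  congr

end AuxiliaryFunction

/-- The weight `2c + c² (g*(y) - ⟨x, y⟩)` multiplying `f x` in `Q`, with `g*` replaced by the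
affine minorant `γ + ⟨w, y - ȳ⟩` that a subgradient `w ∈ ∂g*(ȳ)`, `γ = g*(ȳ)`, provides. -/
def affineWeight (γ : ℝ) (yb w : En n) (u : E4 n) : ℝ :=
  2 * u.2.2.2 + u.2.2.2 ^ 2 * (γ + inner ℝ w (u.2.1 - yb) - inner ℝ u.1 u.2.1)

theorem hasFDerivAt_affineWeight (γ : ℝ) (yb w : En n) (u0 : E4 n) :
    ∃ M' : E4 n →L[ℝ] ℝ, HasFDerivAt (affineWeight γ yb w) M' u0 ∧ ∀ d : E4 n,
      M' d = 2 * d.2.2.2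
        + 2 * u0.2.2.2 * d.2.2.2 * (γ + inner ℝ w (u0.2.1 - yb) - inner ℝ u0.1 u0.2.1)
        + u0.2.2.2 ^ 2 * (inner ℝ w d.2.1 - inner ℝ d.1 u0.2.1 - inner ℝ u0.1 d.2.1) := by
  have hx : HasFDerivAt (fun u : E4 n => u.1) _ u0 :=
    (ContinuousLinearMap.fst ℝ (En n) (En n × En n × ℝ)).hasFDerivAt
  have hy : HasFDerivAt (fun u : E4 n => u.2.1) _ u0 :=
    ((ContinuousLinearMap.fst ℝ (En n) (En n × ℝ)).comp
      (ContinuousLinearMap.snd ℝ (En n) (En n × En n × ℝ))).hasFDerivAt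
  have hc : HasFDerivAt (fun u : E4 n => u.2.2.2) _ u0 :=
    ((ContinuousLinearMap.snd ℝ (En n) ℝ).comp ((ContinuousLinearMap.snd ℝ (En n) (En n × ℝ)).comp
      (ContinuousLinearMap.snd ℝ (En n) (En n × En n × ℝ)))).hasFDerivAt
  refine ⟨_, (hc.const_mul 2).add ((hc.pow 2).mul ((((hasFDerivAt_const w u0).inner ℝ
    (hy.sub_const yb))).const_add γ |>.sub (hx.inner ℝ hy))), fun d => ?_⟩
  simp only [Nat.add_one_sub_one, pow_one, nsmul_eq_mul, Nat.cast_ofNat, add_apply, smul_apply,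
    ContinuousLinearMap.comp_apply, ContinuousLinearMap.coe_snd', smul_eq_mul, sub_apply,
    ContinuousLinearMap.prod_apply, zero_apply, ContinuousLinearMap.coe_fst', fderivInnerCLM_apply,
    inner_zero_left, add_zero]
  ring

theorem hasFDerivAt_comp_fst_sub_inner {h : En n → ℝ} {v : En n} {u0 : E4 n}
    (hh : HasGradientAt h v u0.1) :
    ∃ S' : E4 n →L[ℝ] ℝ, HasFDerivAt (fun u : E4 n => h u.1 - inner ℝ u.1 u.2.2.1) S' u0 ∧
      ∀ d : E4 n, S' d = inner ℝ v d.1 - inner ℝ d.1 u0.2.2.1 - inner ℝ u0.1 d.2.2.1 := by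
  have hx : HasFDerivAt (fun u : E4 n => u.1) _ u0 :=
    (ContinuousLinearMap.fst ℝ (En n) (En n × En n × ℝ)).hasFDerivAt
  have hz : HasFDerivAt (fun u : E4 n => u.2.2.1) _ u0 :=
    ((ContinuousLinearMap.fst ℝ (En n) ℝ).comp ((ContinuousLinearMap.snd ℝ (En n) (En n × ℝ)).comp
      (ContinuousLinearMap.snd ℝ (En n) (En n × En n × ℝ)))).hasFDerivAt
  refine ⟨_, ((hasGradientAt_iff_hasFDerivAt.mp hh).comp u0 hx).sub (hx.inner ℝ hz), fun d => ?_⟩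
  simp only [sub_apply, ContinuousLinearMap.comp_apply, ContinuousLinearMap.coe_fst',
    InnerProductSpace.toDual_apply_apply, ContinuousLinearMap.prod_apply,
    ContinuousLinearMap.coe_snd', fderivInnerCLM_apply]
  ring

theorem hasFrechetLowerWithinAt_Qreal {f g h₁ h₂ : En n → ℝ} {C : Set (En n)}
    {xb yb zb a w bz gradb : En n} {cb : ℝ} (hf0 : ∀ x, 0 ≤ f x)
    (hcalm : (fun x => f x - f xb) =O[𝓝 xb] (fun x => x - xb))
    (ha : HasFrechetLowerWithinAt f (inner ℝ a) C xb)
    (hw : w ∈ eSubdiff (conjF g) yb) (hyb : conjF g yb ≠ ⊤)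
    (hbz : HasFrechetLowerWithinAt (fun z => (conjF h₂ z).toReal) (inner ℝ bz)
      {z | conjF h₂ z ≠ ⊤} zb)
    (hh₁ : HasGradientAt h₁ gradb xb)
    (hμ : 0 ≤ affineWeight (conjF g yb).toReal yb w (xb, yb, zb, cb)) :
    HasFrechetLowerWithinAt (Qreal f g h₁ h₂)
      (inner4 ((2 * cb + cb ^ 2 * ((conjF g yb).toReal - inner ℝ xb yb)) • a
          - (cb ^ 2 * f xb) • yb + gradb - zb,
        (cb ^ 2 * f xb) • w - (cb ^ 2 * f xb) • xb,
        bz - xb,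
        2 * f xb + 2 * cb * f xb * ((conjF g yb).toReal - inner ℝ xb yb)))
      (domQ g h₂ C) (xb, yb, zb, cb) := by
  set γ := (conjF g yb).toReal
  let πx := ContinuousLinearMap.fst ℝ (En n) (En n × En n × ℝ)
  let πz := (ContinuousLinearMap.fst ℝ (En n) ℝ).comp
    ((ContinuousLinearMap.snd ℝ (En n) (En n × ℝ)).comp
      (ContinuousLinearMap.snd ℝ (En n) (En n × En n × ℝ)))
  obtain ⟨M', hM, hM'⟩ := hasFDerivAt_affineWeight γ yb w (xb, yb, zb, cb)
  obtain ⟨S', hS, hS'⟩ := hasFDerivAt_comp_fst_sub_inner (u0 := (xb, yb, zb, cb)) hh₁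
  have hcalmx : (fun u : E4 n => f (πx u) - f xb) =O[𝓝 (xb, yb, zb, cb)]
      (fun u => u - (xb, yb, zb, cb)) :=
    (hcalm.comp_tendsto (πx.continuous.tendsto _)).trans
      ((πx.isBigO_sub _ _).congr_left fun u => map_sub πx u _)
  have hfM := (ha.comp πx).mul hcalmx hM hμ
  have hH := HasFrechetLowerWithinAt.comp (w := (xb, yb, zb, cb)) πz hbz
  have hlow := ((hfM.mono (D' := domQ g h₂ C) fun u hu => hu.1).add
    (hS.hasFrechetLowerWithinAt _)).add (hH.mono fun u hu => hu.2.2)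
  have hle : ∀ u ∈ domQ g h₂ C, f u.1 * affineWeight γ yb w u + (h₁ u.1 - inner ℝ u.1 u.2.2.1)
      + (conjF h₂ u.2.2.1).toReal ≤ Qreal f g h₁ h₂ u := by
    intro u hu
    have := toReal_conjF_add_inner_le hw hyb hu.2.1
    have := mul_le_mul_of_nonneg_left this (mul_nonneg (hf0 u.1) (sq_nonneg u.2.2.2))
    simp only [affineWeight, Qreal]
    nlinarith
  convert hlow.of_le hle (by
    simp only [Qreal, affineWeight, πx, πz, γ, ContinuousLinearMap.coe_fst',
      ContinuousLinearMap.comp_apply, ContinuousLinearMap.coe_snd', sub_self, inner_zero_right,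
      add_zero]
    ring) using 1
  funext d
  simp only [inner4, hM', hS', affineWeight, πx, πz, γ, inner_sub_left, inner_add_left,
    real_inner_comm, real_inner_smul_right, sub_self, inner_zero_right, add_zero,
    ContinuousLinearMap.coe_fst', ContinuousLinearMap.comp_apply, ContinuousLinearMap.coe_snd']
  ring

theorem affineWeight_inv_nonneg {g : En n → ℝ} {x y : En n} (hgx : 0 < g x)
    (hy : conjF g y ≠ ⊤) (w z : En n) :
    0 ≤ affineWeight (conjF g y).toReal y w (x, y, z, 1 / g x) := by
  simp only [affineWeight, sub_self, inner_zero_right, add_zero]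
  have hFY := inner_sub_le_toReal_conjF hy x
  have h : (1 / g x) ^ 2 * (-g x) ≤ (1 / g x) ^ 2 * ((conjF g y).toReal - inner ℝ x y) :=
    mul_le_mul_of_nonneg_left (by linarith) (sq_nonneg _)
  have hcg : (1 / g x) ^ 2 * (-g x) = -(1 / g x) := by field_simp
  have : 0 < 1 / g x := by positivity
  linarith

theorem statement16_general (f g h₁ h₂ : En n → ℝ) (C : Set (En n))
    (hSA : StandingAssumptions f g h₁ h₂ C)
    (xb yb zb : En n) (hxb : xb ∈ Omeg g ∩ C) :
    ∀ a ∈ fsubdiff (fun x : En n => if x ∈ C then ((f x : ℝ) : EReal) else ⊤) xb,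
    ∀ w ∈ eSubdiff (conjF g) yb,
    ∀ bz ∈ fsubdiff (conjF h₂) zb,
      ((2 * (1 / g xb) + (1 / g xb) ^ 2 * ((conjF g yb).toReal - (inner ℝ xb yb : ℝ))) • a
          - ((1 / g xb) ^ 2 * f xb) • yb + gradient h₁ xb - zb,
        ((1 / g xb) ^ 2 * f xb) • w - ((1 / g xb) ^ 2 * f xb) • xb,
        bz - xb,
        2 * f xb + 2 * (1 / g xb) * f xb * ((conjF g yb).toReal - (inner ℝ xb yb : ℝ)))
        ∈ fsubdiff4 (QfunOf f g h₁ h₂ C) (xb, yb, zb, 1 / g xb) := by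
  intro a ha w hw bz hbz
  obtain ⟨hf0, hg0, -, -, -, -, -, hfLip, -, -, hh₁⟩ := hSA
  obtain ⟨hxΩ, hxC⟩ := hxb
  have hgx : 0 < g xb := (hg0 xb).lt_of_ne' hxΩ
  have hyb := conjF_ne_top_of_mem_eSubdiff hg0 hw
  obtain ⟨-, ha⟩ := hasFrechetLowerWithinAt_of_mem_fsubdiff ha
  rw [conjF_eq_ite] at hbz
  obtain ⟨hzb, hbz⟩ := hasFrechetLowerWithinAt_of_mem_fsubdiff hbz
  obtain ⟨s, hs, K, hK⟩ := hfLip xb hxΩ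
  obtain ⟨δ, hδ, hgrad, -⟩ := hh₁ xb hxΩ
  rw [QfunOf_eq_ite]
  exact mem_fsubdiff4_of_hasFrechetLowerWithinAt ⟨hxC, hyb, hzb⟩
    (hasFrechetLowerWithinAt_Qreal hf0 (hK.isBigO_sub hs) ha hw hyb hbz
      (hgrad xb (Metric.mem_ball_self hδ)) (affineWeight_inv_nonneg hgx hyb w zb))

/-- an explicit product set contained in the Fréchet subdifferential of the
auxiliary function `Q` at `(x̄, ȳ, z̄, c̄)` with `c̄ = 1/g(x̄)`:
componentwise, in `x`: `(2c̄ + c̄²(g*(ȳ) - ⟨x̄,ȳ⟩)) ∂̂f_C(x̄) - c̄² f_C(x̄) ȳ + ∇h₁(x̄) - z̄`;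
in `y`: `c̄² f_C(x̄) ∂g*(ȳ) - c̄² f_C(x̄) x̄`; in `z`: `∂̂h₂*(z̄) - x̄`; and in `c` the
singleton `{2 f_C(x̄) + 2 c̄ f_C(x̄) (g*(ȳ) - ⟨x̄,ȳ⟩)}`. -/
theorem statement16 (f g h₁ h₂ : En n → ℝ) (C : Set (En n))
    (hSA : StandingAssumptions f g h₁ h₂ C)
    (xb yb zb : En n) (hxb : xb ∈ Omeg g ∩ C)
    (hyb : (eSubdiff (conjF g) yb).Nonempty)
    (hzb : conjF h₂ zb ≠ ⊤) :
    ∀ a ∈ fsubdiff (fun x : En n => if x ∈ C then ((f x : ℝ) : EReal) else ⊤) xb,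
    ∀ w ∈ eSubdiff (conjF g) yb,
    ∀ bz ∈ fsubdiff (conjF h₂) zb,
      ((2 * (1 / g xb) + (1 / g xb) ^ 2 * ((conjF g yb).toReal - (inner ℝ xb yb : ℝ))) • a
          - ((1 / g xb) ^ 2 * f xb) • yb + gradient h₁ xb - zb,
        ((1 / g xb) ^ 2 * f xb) • w - ((1 / g xb) ^ 2 * f xb) • xb,
        bz - xb,
        2 * f xb + 2 * (1 / g xb) * f xb * ((conjF g yb).toReal - (inner ℝ xb yb : ℝ)))
        ∈ fsubdiff4 (QfunOf f g h₁ h₂ C) (xb, yb, zb, 1 / g xb) :=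
  statement16_general f g h₁ h₂ C hSA xb yb zb hxb
end
end

section
/- Let A ∈ ℝ^{m×n} with m < n have full row rank, b ∉ S_μ, and x̲ < 0 < x̄ componentwise. Let T ∈ ℝ^{m×m} be the diagonal 0/1 matrix with T_{jj} = 1 iff (T_μ(b))_j ≠ 0, choose i* ∈ argmax_i |(b − Tb)ᵀ a_i| (a_i the i-th column of A), set θ̂ := (b − Tb)ᵀ a_{i*}/(‖a_{i*}‖₂² − ‖T a_{i*}‖₂²), and define x⁰ by x⁰_{i*} = argmin{|θ − θ̂| : θ ∈ [x̲_{i*}, x̄_{i*}]} and x⁰_i = 0 for i ≠ i*. Then: (a) ‖a_{i*}‖₂² − ‖T a_{i*}‖₂² > 0 and θ̂ ≠ 0, so x⁰ is well-defined, nonzero, and feasible (x̲ ≤ x⁰ ≤ x̄); and (b) the L₁/L₂ objective satisfies F(x⁰) < 1 + (λ/2)(‖b‖₂² − ‖Tb‖₂²) = 1 + (λ/2)·dist²(b, S_μ). -/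
open Filter Topology Set
open scoped Classical

noncomputable section

variable {n : ℕ}

lemma en_normsq {m : ℕ} (v : En m) : ‖v‖ ^ 2 = ∑ j, v j ^ 2 := by
  rw [PiLp.norm_sq_eq_of_L2]
  simp [Real.norm_eq_abs, sq_abs]

lemma en_inner {m : ℕ} (u v : En m) : (inner ℝ u v : ℝ) = ∑ j, u j * v j := by
  simp [PiLp.inner_apply, mul_comm]

lemma en_sum_single {m : ℕ} (x : En m) :
    x = ∑ i, x i • EuclideanSpace.single i (1 : ℝ) := by
  ext j
  rw [WithLp.ofLp_sum, Finset.sum_apply]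
  simp [EuclideanSpace.single_apply]

lemma sum_ite_not' {m : ℕ} (J : Finset (Fin m)) (g : Fin m → ℝ) :
    ∑ j, (if j ∈ J then 0 else g j)
      = ∑ j ∈ Finset.univ.filter (fun j => j ∉ J), g j := by
  rw [Finset.sum_filter]
  exact Finset.sum_congr rfl fun j _ => by by_cases h : j ∈ J <;> simp [h]

lemma mem_Smu_of {m : ℕ} {μ : ℕ} (J : Finset (Fin m)) (hJ : J.card ≤ μ) (v : En m)
    (h : ∀ j, j ∉ J → v j = 0) : v ∈ Smu (n := m) μ := by
  show {j | v j ≠ 0}.ncard ≤ μ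
  have hsub : {j | v j ≠ 0} ⊆ (J : Set (Fin m)) := by
    intro j hj
    by_contra hjJ
    exact hj (h j (by simpa using hjJ))
  calc {j | v j ≠ 0}.ncard ≤ (J : Set (Fin m)).ncard :=
        Set.ncard_le_ncard hsub J.finite_toSet
    _ = J.card := Set.ncard_coe_finset J
    _ ≤ μ := hJ

lemma diff_normsq {m : ℕ} (J : Finset (Fin m)) (u w : En m)
    (hw : ∀ j, w j = if j ∈ J then u j else 0) :
    ‖u‖ ^ 2 - ‖w‖ ^ 2 = ∑ j ∈ Finset.univ.filter (fun j => j ∉ J), u j ^ 2 := by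
  rw [en_normsq u, en_normsq w]
  have h1 : ∑ j, w j ^ 2 = ∑ j, if j ∈ J then u j ^ 2 else 0 :=
    Finset.sum_congr rfl fun j _ => by rw [hw j]; by_cases h : j ∈ J <;> simp [h]
  have h2 : ∑ j, u j ^ 2
      = ∑ j, ((if j ∈ J then u j ^ 2 else 0) + (if j ∈ J then 0 else u j ^ 2)) :=
    Finset.sum_congr rfl fun j _ => by by_cases h : j ∈ J <;> simp [h]
  rw [h2, Finset.sum_add_distrib, h1, sum_ite_not']
  ring

set_option maxHeartbeats 2000000 in
/-- the initial point `x⁰` constructed from the most correlated column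
`a_{i⋆}` of `A` is well-defined, nonzero and feasible, and satisfies
`F(x⁰) < 1 + (λ/2)(‖b‖² - ‖Tb‖²) = 1 + (λ/2) dist²(b, S_μ)` for the `L₁/L₂` robust
signal recovery model. -/
theorem statement18 {m : ℕ} (hmn : m < n)
    (A : En n →ₗ[ℝ] En m) (hA : Function.Surjective A)
    (b : En m) (lam : ℝ) (hlam : 0 < lam) (μ : ℕ)
    (xlo xhi : En n) (hbox : ∀ i, xlo i < 0 ∧ 0 < xhi i)
    (hb : b ∉ Smu (n := m) μ)
    (J : Finset (Fin m)) (hJ : J.card ≤ μ)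
    (Tb : En m) (hTb : ∀ j, Tb j = if j ∈ J then b j else 0)
    (hproj : ‖b - Tb‖ = Metric.infDist b (Smu (n := m) μ))
    (col : Fin n → En m) (hcol : ∀ i, col i = A (EuclideanSpace.single i 1))
    (Tv : En m → En m) (hTv : ∀ v j, Tv v j = if j ∈ J then v j else 0)
    (istar : Fin n)
    (histar : ∀ i, |(inner ℝ (b - Tb) (col i) : ℝ)| ≤ |(inner ℝ (b - Tb) (col istar) : ℝ)|)
    (θhat : ℝ)
    (hθ : θhat = (inner ℝ (b - Tb) (col istar) : ℝ)
        / (‖col istar‖ ^ 2 - ‖Tv (col istar)‖ ^ 2))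
    (x0 : En n)
    (hx0i : x0 istar ∈ Icc (xlo istar) (xhi istar) ∧
      ∀ θ ∈ Icc (xlo istar) (xhi istar), |x0 istar - θhat| ≤ |θ - θhat|)
    (hx0o : ∀ i, i ≠ istar → x0 i = 0) :
    (0 < ‖col istar‖ ^ 2 - ‖Tv (col istar)‖ ^ 2 ∧ θhat ≠ 0 ∧
      x0 ≠ 0 ∧ (∀ i, xlo i ≤ x0 i ∧ x0 i ≤ xhi i)) ∧
    (Fobj l1 l2 (h1L A b lam) (h2L A b lam μ) (box xlo xhi) x0 <
        ((1 + lam / 2 * (‖b‖ ^ 2 - ‖Tb‖ ^ 2) : ℝ) : EReal) ∧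
      ‖b‖ ^ 2 - ‖Tb‖ ^ 2 = (Metric.infDist b (Smu (n := m) μ)) ^ 2) := by
  set a : En m := col istar with ha
  set θ : ℝ := x0 istar with hθdef
  set Jc : Finset (Fin m) := Finset.univ.filter (fun j => j ∉ J) with hJcdef
  -- pointwise description of b - Tb
  have hbTb : ∀ j, (b - Tb) j = if j ∈ J then 0 else b j := by
    intro j
    by_cases h : j ∈ J <;> simp [PiLp.sub_apply, hTb j, h]
  -- b - Tb ≠ 0
  have hbne : b - Tb ≠ 0 := by
    intro h
    apply hb
    refine mem_Smu_of J hJ b ?_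
    intro j hj
    have h0 : (b - Tb) j = 0 := by rw [h]; rfl
    rw [hbTb j, if_neg hj] at h0
    exact h0
  -- inner ℝ products against b - Tb
  have hinner : ∀ u : En m, (inner ℝ (b - Tb) u : ℝ) = ∑ j ∈ Jc, b j * u j := by
    intro u
    rw [en_inner, ← sum_ite_not' J]
    refine Finset.sum_congr rfl fun j _ => ?_
    rw [hbTb j]
    by_cases h : j ∈ J <;> simp [h]
  -- the max correlation is nonzero
  have hcne : (inner ℝ (b - Tb) a : ℝ) ≠ 0 := by
    intro hc0
    have hall : ∀ i, (inner ℝ (b - Tb) (col i) : ℝ) = 0 := by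
      intro i
      have h1 := histar i
      rw [hc0, abs_zero] at h1
      exact abs_eq_zero.1 (le_antisymm h1 (abs_nonneg _))
    obtain ⟨x, hx⟩ := hA (b - Tb)
    have hAx : (inner ℝ (b - Tb) (A x) : ℝ) = 0 := by
      have hxs : A x = ∑ i, x i • A (EuclideanSpace.single i (1 : ℝ)) := by
        conv_lhs => rw [en_sum_single x]
        rw [map_sum]
        exact Finset.sum_congr rfl fun i _ => by rw [map_smul]
      rw [hxs, inner_sum]
      refine Finset.sum_eq_zero fun i _ => ?_
      rw [real_inner_smul_right, ← hcol i, hall i, mul_zero]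
    rw [hx, real_inner_self_eq_norm_sq] at hAx
    exact hbne (norm_eq_zero.1 (by nlinarith [norm_nonneg (b - Tb)]))
  -- d > 0
  have hdiffa : ‖a‖ ^ 2 - ‖Tv a‖ ^ 2 = ∑ j ∈ Jc, a j ^ 2 :=
    diff_normsq J a (Tv a) (hTv a)
  have hdpos : 0 < ‖a‖ ^ 2 - ‖Tv a‖ ^ 2 := by
    rcases lt_or_eq_of_le (Finset.sum_nonneg fun j _ => sq_nonneg (a j)) with h | h
    · rwa [hdiffa]
    · exfalso
      apply hcne
      rw [hinner a]
      refine Finset.sum_eq_zero fun j hj => ?_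
      have : a j = 0 := by
        have := (Finset.sum_eq_zero_iff_of_nonneg
          (fun j _ => sq_nonneg (a j))).1 h.symm j hj
        nlinarith [this]
      rw [this, mul_zero]
  have hθhatne : θhat ≠ 0 := by
    rw [hθ]
    exact div_ne_zero hcne (ne_of_gt hdpos)
  -- the minimizer is close to θhat
  have hchoice : |θ - θhat| < |θhat| := by
    rcases lt_or_gt_of_ne hθhatne with hneg | hpos
    · have hm : max θhat (xlo istar) < 0 := max_lt hneg (hbox istar).1
      have ht : max θhat (xlo istar) ∈ Icc (xlo istar) (xhi istar) :=
        ⟨le_max_right _ _, le_of_lt (lt_trans hm (hbox istar).2)⟩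
      refine lt_of_le_of_lt (hx0i.2 _ ht) ?_
      rw [abs_of_nonneg (by simp [sub_nonneg]), abs_of_neg hneg]
      linarith [le_max_left θhat (xlo istar)]
    · have hm : 0 < min θhat (xhi istar) := lt_min hpos (hbox istar).2
      have ht : min θhat (xhi istar) ∈ Icc (xlo istar) (xhi istar) :=
        ⟨le_of_lt (lt_trans (hbox istar).1 hm), min_le_right _ _⟩
      refine lt_of_le_of_lt (hx0i.2 _ ht) ?_
      rw [abs_of_nonpos (by simp [sub_nonpos]), abs_of_pos hpos]
      linarith [min_le_left θhat (xhi istar)]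
  have hθne : θ ≠ 0 := by
    intro h
    rw [h, zero_sub, abs_neg] at hchoice
    exact lt_irrefl _ hchoice
  have hkey : θ ^ 2 - 2 * θ * θhat < 0 := by
    have h2 : |θ - θhat| ^ 2 < |θhat| ^ 2 := by
      nlinarith [abs_nonneg (θ - θhat), abs_nonneg θhat]
    rw [sq_abs, sq_abs] at h2
    nlinarith [h2]
  -- part (a)
  have hx0ne : x0 ≠ 0 := by
    intro h
    apply hθne
    rw [hθdef, h]
    rfl
  have hfeas : ∀ i, xlo i ≤ x0 i ∧ x0 i ≤ xhi i := by
    intro i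
    by_cases hi : i = istar
    · subst hi; exact ⟨hx0i.1.1, hx0i.1.2⟩
    · rw [hx0o i hi]
      exact ⟨le_of_lt (hbox i).1, le_of_lt (hbox i).2⟩
  refine ⟨⟨hdpos, hθhatne, hx0ne, hfeas⟩, ?_, ?_⟩
  · -- objective bound
    have hx0single : x0 = θ • EuclideanSpace.single istar (1 : ℝ) := by
      ext j
      by_cases hj : j = istar
      · subst hj; simp [EuclideanSpace.single_apply, hθdef]
      · simp [hx0o j hj, EuclideanSpace.single_apply, hj]
    have hAx0 : ∀ j, (A x0) j = θ * a j := by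
      intro j
      rw [hx0single, map_smul, ha, hcol istar]
      simp
    have hl1 : l1 x0 = |θ| := by
      show (∑ i, |x0 i|) = |θ|
      rw [Finset.sum_eq_single istar (fun i _ hi => by rw [hx0o i hi, abs_zero])
        (fun h => absurd (Finset.mem_univ istar) h)]
    have hl2 : l2 x0 = |θ| := by
      have h2 : ‖x0‖ ^ 2 = θ ^ 2 := by
        rw [en_normsq]
        rw [Finset.sum_eq_single istar (fun i _ hi => by rw [hx0o i hi]; ring)
          (fun h => absurd (Finset.mem_univ istar) h)]
      show ‖x0‖ = |θ|
      rw [← Real.sqrt_sq (norm_nonneg x0), h2, Real.sqrt_sq_eq_abs]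
    set v : En m := A x0 - b with hv
    have hTvmem : Tv v ∈ Smu (n := m) μ :=
      mem_Smu_of J hJ _ (fun j hj => by rw [hTv]; simp [hj])
    have hdistle : Metric.infDist v (Smu (n := m) μ) ≤ ‖v - Tv v‖ := by
      have h := Metric.infDist_le_dist_of_mem (x := v) hTvmem
      rwa [dist_eq_norm] at h
    have hnormsq : ‖v - Tv v‖ ^ 2 = ∑ j ∈ Jc, (θ * a j - b j) ^ 2 := by
      rw [en_normsq, ← sum_ite_not' J]
      refine Finset.sum_congr rfl fun j _ => ?_
      have hvj : v j = θ * a j - b j := by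
        rw [hv]; simp [PiLp.sub_apply, hAx0 j]
      by_cases h : j ∈ J <;> simp [PiLp.sub_apply, hTv, h, hvj]
    have hexp : ∑ j ∈ Jc, (θ * a j - b j) ^ 2
        = (∑ j ∈ Jc, a j ^ 2) * θ ^ 2 - 2 * (∑ j ∈ Jc, b j * a j) * θ
          + ∑ j ∈ Jc, b j ^ 2 := by
      simp only [Finset.sum_mul, Finset.mul_sum, ← Finset.sum_add_distrib,
        ← Finset.sum_sub_distrib]
      exact Finset.sum_congr rfl fun j _ => by ring
    have hdiffb : ‖b‖ ^ 2 - ‖Tb‖ ^ 2 = ∑ j ∈ Jc, b j ^ 2 := diff_normsq J b Tb hTb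
    have hceq : (∑ j ∈ Jc, b j * a j) = (‖a‖ ^ 2 - ‖Tv a‖ ^ 2) * θhat := by
      rw [hθ, ← hinner a]
      field_simp
    have hq : ∑ j ∈ Jc, (θ * a j - b j) ^ 2 < ‖b‖ ^ 2 - ‖Tb‖ ^ 2 := by
      rw [hexp, hdiffb, ← hdiffa, hceq]
      nlinarith [mul_neg_of_pos_of_neg hdpos hkey]
    have hdist2 : (Metric.infDist v (Smu (n := m) μ)) ^ 2 < ‖b‖ ^ 2 - ‖Tb‖ ^ 2 := by
      have h0 : (0 : ℝ) ≤ Metric.infDist v (Smu (n := m) μ) := Metric.infDist_nonneg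
      have h1 : (Metric.infDist v (Smu (n := m) μ)) ^ 2 ≤ ‖v - Tv v‖ ^ 2 :=
        pow_le_pow_left₀ h0 hdistle 2
      exact lt_of_le_of_lt h1 (by rw [hnormsq]; exact hq)
    have hmemΩ : x0 ∈ Omeg l2 ∩ box xlo xhi := by
      constructor
      · show l2 x0 ≠ 0
        rw [hl2]
        exact abs_ne_zero.2 hθne
      · exact hfeas
    have hFeq : Fobj l1 l2 (h1L A b lam) (h2L A b lam μ) (box xlo xhi) x0
        = ((l1 x0 / l2 x0 + (h1L A b lam x0 - h2L A b lam μ x0) : ℝ) : EReal) := by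
      simp only [Fobj]
      rw [if_pos hmemΩ]
    rw [hFeq, EReal.coe_lt_coe_iff]
    have hratio : l1 x0 / l2 x0 = 1 := by
      rw [hl1, hl2]
      exact div_self (abs_ne_zero.2 hθne)
    have hval : h1L A b lam x0 - h2L A b lam μ x0
        = lam / 2 * (Metric.infDist v (Smu (n := m) μ)) ^ 2 := by
      simp only [h1L, h2L]
      rw [← hv]
      ring
    rw [hratio, hval]
    have := mul_lt_mul_of_pos_left hdist2 (by linarith : (0:ℝ) < lam / 2)
    linarith
  · -- the distance identity
    rw [← hproj, diff_normsq J b Tb hTb, en_normsq, ← sum_ite_not' J]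
    refine (Finset.sum_congr rfl fun j _ => ?_).symm
    rw [hbTb j]
    by_cases h : j ∈ J <;> simp [h]

end
end
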